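/- Let C : L²(0,1;ℝ) → ℝ be defined by C(K) = ∫₀¹ (K_t X_t)² dt where X_t = exp(∫₀ᵗ K_s ds). For ε > 0 set K^ε_t = -(1+ε-t)^{-1}. Then C(0.5·K^ε) = (0.25/(1+ε))·ln((1+ε)/ε), and consequently there exists ε₀ > 0 such that for all ε ∈ (0, ε₀], C(0.5·K^ε) > max{C(0), C(K^ε)}. Hence C is not quasiconvex. -/

import Mathlib

open MeasureTheory

/-- The LQ cost `C(K) = ∫₀¹ (K_t X_t)² dt` where `X_t = exp(∫₀ᵗ K_s ds)`. -/
noncomputable def lqCost (K : ℝ → ℝ) : ℝ :=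
  ∫ t in (0:ℝ)..1, (K t * Real.exp (∫ s in (0:ℝ)..t, K s)) ^ 2

/-- The family of policies `K^ε_t = -(1+ε-t)⁻¹`. -/
noncomputable def Keps (ε : ℝ) : ℝ → ℝ := fun t => -(1 + ε - t)⁻¹

lemma hasDerivAt_neg_log_aux (ε s : ℝ) (h : 0 < 1 + ε - s) :
    HasDerivAt (fun x => -Real.log (1 + ε - x)) (1 + ε - s)⁻¹ s := by
  have h1 : HasDerivAt (fun x : ℝ => 1 + ε - x) (-1) s := by
    exact (hasDerivAt_id' s).const_sub (1 + ε)
  have h2 := (Real.hasDerivAt_log h.ne').comp s h1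
  exact h2.neg.congr_deriv (by ring)

lemma L1 (ε t : ℝ) (hε : 0 < ε) (ht0 : 0 ≤ t) (ht1 : t ≤ 1) :
    ∫ s in (0:ℝ)..t, (1 + ε - s)⁻¹ = Real.log (1 + ε) - Real.log (1 + ε - t) := by
  have h := intervalIntegral.integral_eq_sub_of_hasDerivAt
    (f := fun x => -Real.log (1 + ε - x)) (f' := fun s => (1 + ε - s)⁻¹)
    (a := 0) (b := t) ?_ ?_
  · rw [h]; ring
  · intro s hs
    rw [Set.uIcc_of_le ht0] at hs
    exact hasDerivAt_neg_log_aux ε s (by linarith [hs.1, hs.2])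
  · apply ContinuousOn.intervalIntegrable
    apply ContinuousOn.inv₀ (by fun_prop)
    intro s hs
    rw [Set.uIcc_of_le ht0] at hs
    have := hs.2
    nlinarith [hs.2]

lemma inner_Keps (ε t : ℝ) (hε : 0 < ε) (ht0 : 0 ≤ t) (ht1 : t ≤ 1) :
    ∫ s in (0:ℝ)..t, Keps ε s = Real.log (1 + ε - t) - Real.log (1 + ε) := by
  unfold Keps
  rw [intervalIntegral.integral_neg, L1 ε t hε ht0 ht1]; ring

lemma lqCost_half_Keps (ε : ℝ) (hε : 0 < ε) :
    lqCost (fun t => 0.5 * Keps ε t) = (0.25 / (1 + ε)) * Real.log ((1 + ε) / ε) := by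
  have hA : (0:ℝ) < 1 + ε := by linarith
  have hcong : Set.EqOn
      (fun t => (0.5 * Keps ε t * Real.exp (∫ s in (0:ℝ)..t, 0.5 * Keps ε s)) ^ 2)
      (fun t => (0.25 / (1 + ε)) * (1 + ε - t)⁻¹) (Set.uIcc 0 1) := by
    intro t ht
    dsimp only
    rw [Set.uIcc_of_le zero_le_one] at ht
    have hu : (0:ℝ) < 1 + ε - t := by linarith [ht.2]
    have hin : (∫ s in (0:ℝ)..t, 0.5 * Keps ε s)
        = 0.5 * (Real.log (1 + ε - t) - Real.log (1 + ε)) := by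
      rw [intervalIntegral.integral_const_mul, inner_Keps ε t hε ht.1 ht.2]
    rw [hin]
    simp only [Keps]
    have hexp : Real.exp (0.5 * (Real.log (1 + ε - t) - Real.log (1 + ε))) ^ 2
        = (1 + ε - t) / (1 + ε) := by
      rw [sq, ← Real.exp_add]
      have h5 : 0.5 * (Real.log (1+ε-t) - Real.log (1+ε))
            + 0.5 * (Real.log (1+ε-t) - Real.log (1+ε))
          = Real.log (1+ε-t) - Real.log (1+ε) := by ring
      rw [h5, Real.exp_sub, Real.exp_log hu, Real.exp_log hA]
    rw [mul_pow, hexp]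
    field_simp
    ring
  unfold lqCost
  rw [intervalIntegral.integral_congr hcong,
      intervalIntegral.integral_const_mul, L1 ε 1 hε zero_le_one le_rfl]
  have h1 : (1:ℝ) + ε - 1 = ε := by ring
  rw [h1, ← Real.log_div hA.ne' hε.ne']

lemma lqCost_Keps (ε : ℝ) (hε : 0 < ε) : lqCost (Keps ε) = 1 / (1 + ε) ^ 2 := by
  have hA : (0:ℝ) < 1 + ε := by linarith
  have hcong : Set.EqOn
      (fun t => (Keps ε t * Real.exp (∫ s in (0:ℝ)..t, Keps ε s)) ^ 2)
      (fun _ => 1 / (1 + ε) ^ 2) (Set.uIcc 0 1) := by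
    intro t ht
    dsimp only
    rw [Set.uIcc_of_le zero_le_one] at ht
    have hu : (0:ℝ) < 1 + ε - t := by linarith [ht.2]
    rw [inner_Keps ε t hε ht.1 ht.2]
    simp only [Keps]
    rw [mul_pow, Real.exp_sub, Real.exp_log hu, Real.exp_log hA]
    field_simp
  unfold lqCost
  rw [intervalIntegral.integral_congr hcong, intervalIntegral.integral_const]
  simp

lemma lqCost_zero : lqCost (fun _ => 0) = 0 := by
  simp [lqCost]

theorem lqCost_not_quasiconvex :
    (∀ ε : ℝ, 0 < ε →
      lqCost (fun t => 0.5 * Keps ε t) = (0.25 / (1 + ε)) * Real.log ((1 + ε) / ε)) ∧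
    (∃ ε₀ > (0:ℝ), ∀ ε ∈ Set.Ioc (0:ℝ) ε₀,
      lqCost (fun t => 0.5 * Keps ε t) > max (lqCost (fun _ => 0)) (lqCost (Keps ε))) ∧
    ¬ (∀ (K₁ K₂ : ℝ → ℝ), ∀ l ∈ Set.Icc (0:ℝ) 1,
        lqCost (fun t => l * K₁ t + (1 - l) * K₂ t) ≤ max (lqCost K₁) (lqCost K₂)) := by
  have key : ∀ ε ∈ Set.Ioc (0:ℝ) (1/100),
      lqCost (fun t => 0.5 * Keps ε t) > max (lqCost (fun _ => 0)) (lqCost (Keps ε)) := by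
    intro ε hε
    obtain ⟨hε0, hε1⟩ := hε
    have hA : (0:ℝ) < 1 + ε := by linarith
    rw [lqCost_half_Keps ε hε0, lqCost_Keps ε hε0, lqCost_zero]
    have hL : (4:ℝ) < Real.log ((1 + ε) / ε) := by
      have h100 : (100:ℝ) ≤ (1 + ε) / ε := by
        rw [le_div_iff₀ hε0]; nlinarith
      have hexp4 : Real.exp 4 < 100 := by
        have h := Real.exp_one_lt_d9
        have h4 : Real.exp 1 ^ 4 = Real.exp 4 := by
          rw [Real.exp_one_pow]; norm_num
        have h5 : Real.exp 1 ^ 4 < 2.7182818286 ^ 4 :=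
          pow_lt_pow_left₀ h (Real.exp_pos 1).le (by norm_num)
        rw [← h4]
        nlinarith
      have h4log : (4:ℝ) < Real.log 100 :=
        (Real.lt_log_iff_exp_lt (by norm_num)).mpr hexp4
      calc (4:ℝ) < Real.log 100 := h4log
        _ ≤ Real.log ((1 + ε) / ε) :=
            Real.log_le_log (by norm_num) h100
    have hmax : max (0:ℝ) (1 / (1 + ε) ^ 2) = 1 / (1 + ε) ^ 2 := by
      rw [max_eq_right]; positivity
    rw [hmax, gt_iff_lt, div_mul_eq_mul_div, div_lt_div_iff₀ (by positivity) hA]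
    nlinarith
  refine ⟨fun ε hε => lqCost_half_Keps ε hε, ⟨1/100, by norm_num, key⟩, ?_⟩
  intro h
  have hε : (1/100 : ℝ) ∈ Set.Ioc (0:ℝ) (1/100) := by norm_num
  have h2 := h (Keps (1/100)) (fun _ => 0) 0.5 (by norm_num)
  have heq : (fun t => 0.5 * Keps (1/100) t + (1 - 0.5) * (0:ℝ))
      = fun t => 0.5 * Keps (1/100) t := by
    funext t; ring
  rw [heq, max_comm] at h2
  exact absurd h2 (not_le.mpr (key (1/100) hε))
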